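/- If a polynomial p ∈ ℝ[z] satisfies the identity p(z) + p(-1-z) = 0 (as an identity of polynomials), then θ(p) = 0. -/

import Mathlib

open PowerSeries Finset Nat Finset.Nat

lemma aux1 : (PowerSeries.exp ℚ + 1) * PowerSeries.rescale (2:ℚ) (bernoulliPowerSeries ℚ)
    = 2 * bernoulliPowerSeries ℚ := by
  have hB := bernoulliPowerSeries_mul_exp_sub_one ℚ
  have hne : PowerSeries.exp ℚ - 1 ≠ 0 := by
    intro h
    have := congrArg (PowerSeries.coeff 1) h
    simp [PowerSeries.coeff_exp] at this
  apply mul_right_cancel₀ hne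
  have h2 : PowerSeries.rescale (2:ℚ) (bernoulliPowerSeries ℚ)
      * PowerSeries.rescale (2:ℚ) (PowerSeries.exp ℚ - 1) = PowerSeries.rescale (2:ℚ) X := by
    rw [← map_mul, hB]
  have hexp : PowerSeries.rescale (2:ℚ) (PowerSeries.exp ℚ) = PowerSeries.exp ℚ ^ 2 := by
    rw [PowerSeries.exp_pow_eq_rescale_exp]; norm_num
  calc (PowerSeries.exp ℚ + 1) * PowerSeries.rescale (2:ℚ) (bernoulliPowerSeries ℚ)
      * (PowerSeries.exp ℚ - 1)
      = PowerSeries.rescale (2:ℚ) (bernoulliPowerSeries ℚ)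
        * (PowerSeries.exp ℚ ^ 2 - 1) := by ring
    _ = PowerSeries.rescale (2:ℚ) (bernoulliPowerSeries ℚ)
        * PowerSeries.rescale (2:ℚ) (PowerSeries.exp ℚ - 1) := by
          rw [map_sub, hexp, map_one]
    _ = PowerSeries.rescale (2:ℚ) X := h2
    _ = PowerSeries.C (2:ℚ) * X := PowerSeries.rescale_X (2:ℚ)
    _ = 2 * (bernoulliPowerSeries ℚ * (PowerSeries.exp ℚ - 1)) := by rw [hB]; rw [map_ofNat]
    _ = 2 * bernoulliPowerSeries ℚ * (PowerSeries.exp ℚ - 1) := by ring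

lemma aux2 (m : ℕ) :
    ∑ j ∈ range (m+1), (m.choose j : ℚ) * 2^j * bernoulli j = (2 - 2^m) * bernoulli m := by
  have h := congrArg (PowerSeries.coeff m) aux1
  have h2 : (2 : ℚ⟦X⟧) * bernoulliPowerSeries ℚ = PowerSeries.C (2:ℚ) * bernoulliPowerSeries ℚ := by
    rw [map_ofNat]
  rw [add_mul, one_mul, map_add, PowerSeries.coeff_mul, h2, PowerSeries.coeff_C_mul] at h
  simp only [PowerSeries.coeff_rescale, bernoulliPowerSeries, PowerSeries.coeff_mk,
    PowerSeries.coeff_exp, Algebra.algebraMap_self_apply, one_div] at h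
  rw [sum_antidiagonal_eq_sum_range_succ
    (fun i j => ((i ! : ℚ))⁻¹ * (2 ^ j * (bernoulli j / j !)))] at h
  rw [← Finset.sum_range_reflect] at h
  have e : ∑ j ∈ range (m+1),
        (((m + 1 - 1 - j)! : ℚ))⁻¹ * (2 ^ (m - (m + 1 - 1 - j)) *
          (bernoulli (m - (m + 1 - 1 - j)) / (m - (m + 1 - 1 - j))!))
      = ∑ j ∈ range (m+1), (((m - j)! : ℚ))⁻¹ * (2 ^ j * (bernoulli j / j !)) := by
    refine sum_congr rfl fun j hj => ?_
    have hj' : j ≤ m := Nat.lt_succ_iff.mp (mem_range.mp hj)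
    rw [Nat.add_sub_cancel, Nat.sub_sub_self hj']
  rw [e] at h
  have key : ∀ j ∈ range (m+1), (m.choose j : ℚ) * 2^j * bernoulli j
      = m ! * ((((m - j)! : ℚ))⁻¹ * (2 ^ j * (bernoulli j / j !))) := by
    intro j hj
    have hj' : j ≤ m := Nat.lt_succ_iff.mp (mem_range.mp hj)
    rw [Nat.cast_choose ℚ hj']
    have h1 : (j ! : ℚ) ≠ 0 := mod_cast j.factorial_ne_zero
    have h2 : ((m - j)! : ℚ) ≠ 0 := mod_cast (m - j).factorial_ne_zero
    field_simp
  calc ∑ j ∈ range (m+1), (m.choose j : ℚ) * 2^j * bernoulli j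
      = m ! * ∑ j ∈ range (m+1), (((m - j)! : ℚ))⁻¹ * (2 ^ j * (bernoulli j / j !)) := by
        rw [mul_sum]; exact sum_congr rfl key
    _ = m ! * (2 * (bernoulli m / m !) - 2^m * (bernoulli m / m !)) := by
        rw [eq_sub_of_add_eq h]
    _ = (2 - 2^m) * bernoulli m := by
        have hm : (m ! : ℚ) ≠ 0 := mod_cast m.factorial_ne_zero
        field_simp

lemma aux3 (n : ℕ) :
    ∑ j ∈ range (n+2), ((n+1).choose j : ℚ) * (2^j - 1) * bernoulli j
      = (1 - 2^(n+1)) * bernoulli (n+1) - (if n = 0 then 1 else 0) := by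
  have e1 : ∀ j ∈ range (n+2), ((n+1).choose j : ℚ) * (2^j - 1) * bernoulli j
      = ((n+1).choose j : ℚ) * 2^j * bernoulli j - ((n+1).choose j : ℚ) * bernoulli j := by
    intro j _; ring
  rw [sum_congr rfl e1, sum_sub_distrib, aux2 (n+1), sum_range_succ, choose_self,
    sum_bernoulli (n+1)]
  have : ¬ (n + 1 = 1) ∨ (n = 0) := by omega
  rcases Nat.eq_zero_or_pos n with h | h
  · subst h; norm_num
  · rw [if_neg (by omega), if_neg (by omega)]
    push_cast
    ring

lemma keyQ (n : ℕ) :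
    (-1:ℚ)^n * ∑ k ∈ range (n+1), (n.choose k : ℚ) *
        (4 * (2^(k+1) - 1) * bernoulli (k+1) / (k+1))
      = 4 * (2^(n+1) - 1) * bernoulli (n+1) / (n+1) := by
  have hn1 : ((n:ℚ) + 1) ≠ 0 := by positivity
  have e1 : ∀ k ∈ range (n+1), (n.choose k : ℚ) *
        (4 * (2^(k+1) - 1) * bernoulli (k+1) / (k+1))
      = (4 / (n+1)) * (((n+1).choose (k+1) : ℚ) * (2^(k+1) - 1) * bernoulli (k+1)) := by
    intro k _
    have h := Nat.add_one_mul_choose_eq n k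
    have h' : ((n:ℚ)+1) * (n.choose k : ℚ) = ((n+1).choose (k+1) : ℚ) * ((k:ℚ)+1) := by
      exact_mod_cast congrArg (Nat.cast : ℕ → ℚ) h
    have hk1 : ((k:ℚ) + 1) ≠ 0 := by positivity
    field_simp
    linear_combination (((2:ℚ)^(k+1) - 1) * bernoulli (k+1)) * h'
  rw [sum_congr rfl e1, ← mul_sum]
  have e2 : ∑ k ∈ range (n+1), (((n+1).choose (k+1) : ℚ) * (2^(k+1) - 1) * bernoulli (k+1))
      = ∑ j ∈ range (n+2), ((n+1).choose j : ℚ) * (2^j - 1) * bernoulli j := by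
    rw [sum_range_succ' (fun j => ((n+1).choose j : ℚ) * (2^j - 1) * bernoulli j) (n+1)]
    simp
  rw [e2, aux3]
  rcases Nat.eq_zero_or_pos n with h | h
  · subst h; norm_num
  · rw [if_neg (by omega)]
    rcases Nat.even_or_odd n with he | ho
    · have hodd : bernoulli (n+1) = 0 := by
        rw [bernoulli_eq_bernoulli'_of_ne_one (by omega)]
        exact bernoulli'_eq_zero_of_odd (Even.add_one he) (by omega)
      rw [hodd]; ring
    · rw [ho.neg_one_pow]; ring

/-- The linear map `θ : ℝ[z] → ℝ` determined by
`θ(z^n) = 4 (2^{n+1} - 1) B_{n+1} / (n+1)`, with `bernoulli` Mathlib's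
Bernoulli numbers (convention `B_1 = -1/2`). -/
noncomputable def theta (p : Polynomial ℝ) : ℝ :=
  p.sum fun n a => a * (4 * (2 ^ (n + 1) - 1) * ((bernoulli (n + 1) : ℚ) : ℝ) / (n + 1))

noncomputable def cR (n : ℕ) : ℝ :=
  4 * (2 ^ (n + 1) - 1) * ((bernoulli (n + 1) : ℚ) : ℝ) / (n + 1)

lemma keyR (n : ℕ) :
    (-1:ℝ)^n * ∑ k ∈ range (n+1), (n.choose k : ℝ) * cR k = cR n := by
  have h := congrArg (fun q : ℚ => (q : ℝ)) (keyQ n)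
  simp only [Rat.cast_mul, Rat.cast_sum, Rat.cast_div, Rat.cast_pow, Rat.cast_neg,
    Rat.cast_one, Rat.cast_sub, Rat.cast_ofNat, Rat.cast_natCast, Rat.cast_add] at h
  convert h using 3 <;> simp [cR] <;> push_cast <;> ring

lemma theta_add (p q : Polynomial ℝ) : theta (p + q) = theta p + theta q :=
  Polynomial.sum_add_index p q _ (fun _ => by simp) (fun _ _ _ => by ring)

lemma theta_smul (r : ℝ) (p : Polynomial ℝ) : theta (r • p) = r * theta p := by
  rw [theta, Polynomial.sum_smul_index _ _ _ (fun _ => by simp), theta, Polynomial.sum,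
    Polynomial.sum, Finset.mul_sum]
  exact Finset.sum_congr rfl fun n _ => by ring

noncomputable def Theta : Polynomial ℝ →ₗ[ℝ] ℝ where
  toFun := theta
  map_add' := theta_add
  map_smul' := theta_smul

lemma theta_monomial (n : ℕ) (a : ℝ) : theta (Polynomial.monomial n a) = a * cR n := by
  rw [theta, Polynomial.sum_monomial_index _ _ (by simp)]; rfl

lemma expand_pow (n : ℕ) (a : ℝ) : Polynomial.C a * (-1 - Polynomial.X : Polynomial ℝ)^n
    = ∑ k ∈ range (n+1), Polynomial.monomial k (a * ((-1:ℝ)^n * (n.choose k : ℝ))) := by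
  have h1 : (-1 - Polynomial.X : Polynomial ℝ) = (Polynomial.X + 1) * (-1) := by ring
  rw [h1, mul_pow, add_pow]
  simp only [one_pow, mul_one, Finset.sum_mul, Finset.mul_sum]
  refine Finset.sum_congr rfl fun k hk => ?_
  rw [← Polynomial.C_mul_X_pow_eq_monomial]
  simp only [map_mul, map_pow, map_neg, map_one, Polynomial.C_eq_natCast]
  ring

lemma theta_comp (p : Polynomial ℝ) : theta (p.comp (-1 - Polynomial.X)) = theta p := by
  induction p using Polynomial.induction_on' with
  | add p q hp hq => rw [Polynomial.add_comp, theta_add, hp, hq, theta_add]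
  | monomial n a =>
    rw [Polynomial.monomial_comp, expand_pow, theta_monomial]
    have : theta (∑ k ∈ range (n+1), Polynomial.monomial k (a * ((-1:ℝ)^n * (n.choose k : ℝ))))
        = ∑ k ∈ range (n+1), theta (Polynomial.monomial k (a * ((-1:ℝ)^n * (n.choose k : ℝ)))) :=
      map_sum Theta _ _
    rw [this]
    simp only [theta_monomial]
    rw [show ∑ k ∈ range (n+1), a * ((-1:ℝ)^n * (n.choose k : ℝ)) * cR k
        = a * ((-1:ℝ)^n * ∑ k ∈ range (n+1), (n.choose k : ℝ) * cR k) by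
      rw [Finset.mul_sum, Finset.mul_sum]; exact Finset.sum_congr rfl fun k _ => by ring]
    rw [keyR]

theorem theta_vanishes_on_antisymmetric (p : Polynomial ℝ)
    (hp : p + p.comp (-1 - Polynomial.X) = 0) :
    theta p = 0 := by
  have h0 : theta (p + p.comp (-1 - Polynomial.X)) = 0 := by
    rw [hp]; exact Polynomial.sum_zero_index _
  rw [theta_add, theta_comp] at h0
  linarith
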